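/- Let A be a commutative ring satisfying condition (MP), with total ring of fractions K and integral closure A' of A in K. If an element u ∈ K is integral over the subring O(A) = (1+ΣA²)⁻¹A of K, then there exist a ∈ A' and t ∈ 1+ΣA² such that t·u = a in K; in particular the integral closure of O(A) in K is contained in the subring O(A') = {a/t : a ∈ A', t ∈ 1+Σ(A')²} of K. -/

import Mathlib

/-- An ideal `I` of a commutative ring is *real* if whenever a sum of squares
`a 0 ^ 2 + ⋯ + a (n-1) ^ 2` belongs to `I`, each `a i` belongs to `I`. -/
def IsRealIdeal {A : Type*} [CommRing A] (I : Ideal A) : Prop :=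
  ∀ (n : ℕ) (a : Fin n → A), (∑ i, a i ^ 2) ∈ I → ∀ i, a i ∈ I

theorem isSumSq_sq_mul {R : Type*} [CommRing R] (a : R) {t : R} (ht : IsSumSq t) :
    IsSumSq (a * a * t) := by
  induction ht with
  | zero => simpa using IsSumSq.zero
  | @sq_add b T pT ih =>
    have h2 : a * a * (b * b + T) = (a * b) * (a * b) + a * a * T := by ring
    rw [h2]
    exact IsSumSq.sq_add _ ih

theorem isSumSq_mul {R : Type*} [CommRing R] {s t : R} (hs : IsSumSq s) (ht : IsSumSq t) :
    IsSumSq (s * t) := by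
  induction hs with
  | zero => simpa using IsSumSq.zero
  | @sq_add a S pS ih =>
    have h : (a * a + S) * t = (a * a) * t + S * t := by ring
    rw [h]
    exact (isSumSq_sq_mul a ht).add ih

/-- Given a ring homomorphism `f : A →+* K`, the subring `O(A)` of `K` consisting of the
"fractions" `f a / f (1 + s)` with `s` a sum of squares, described without inverses as the
set of `x : K` with `f (1 + s) * x = f a`. -/
def ringO {A K : Type*} [CommRing A] [CommRing K] (f : A →+* K) : Subring K where
  carrier := {x | ∃ a s : A, IsSumSq s ∧ f (1 + s) * x = f a}
  zero_mem' := ⟨0, 0, IsSumSq.zero, by simp⟩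
  one_mem' := ⟨1, 0, IsSumSq.zero, by simp⟩
  neg_mem' := by
    rintro x ⟨a, s, hs, hx⟩
    exact ⟨-a, s, hs, by rw [mul_neg, hx, map_neg]⟩
  add_mem' := by
    rintro x y ⟨a, s, hs, hx⟩ ⟨b, t, ht, hy⟩
    refine ⟨(1 + t) * a + (1 + s) * b, s + t + s * t, (hs.add ht).add (isSumSq_mul hs ht), ?_⟩
    have h1 : (1 : A) + (s + t + s * t) = (1 + s) * (1 + t) := by ring
    rw [h1, map_mul]
    have h2 : f (1 + s) * f (1 + t) * (x + y)
        = f (1 + t) * (f (1 + s) * x) + f (1 + s) * (f (1 + t) * y) := by ring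
    rw [h2, hx, hy, ← map_mul, ← map_mul, ← map_add]
  mul_mem' := by
    rintro x y ⟨a, s, hs, hx⟩ ⟨b, t, ht, hy⟩
    refine ⟨a * b, s + t + s * t, (hs.add ht).add (isSumSq_mul hs ht), ?_⟩
    have h1 : (1 : A) + (s + t + s * t) = (1 + s) * (1 + t) := by ring
    rw [h1, map_mul]
    have h2 : f (1 + s) * f (1 + t) * (x * y) = (f (1 + s) * x) * (f (1 + t) * y) := by ring
    rw [h2, hx, hy, ← map_mul]

/-!
Clearing denominators. The coefficients of a monic equation of `u` over `O(A)` have a common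
denominator `t ∈ 1 + ΣA²`, since `1 + ΣA²` is multiplicatively closed; rescaling the roots of the
equation by `t` gives a monic equation of `t u` over `A`, so `t u ∈ A'`. Since the image of a sum
of squares of `A` is a sum of squares of `A'`, this writes `u = (t u) / t` as an element of `O(A')`.
-/

open Polynomial

theorem IsSumSq.map {R S F : Type*} [NonUnitalNonAssocSemiring R] [NonUnitalNonAssocSemiring S]
    [FunLike F R S] [NonUnitalRingHomClass F R S] (f : F) {s : R} (hs : IsSumSq s) :
    IsSumSq (f s) := by
  induction hs with
  | zero =>
    rw [map_zero]
    exact .zero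
  | sq_add a _ ih =>
    rw [map_add, map_mul]
    exact ih.sq_add _

def oneAddSumSq (A : Type*) [CommRing A] : Submonoid A where
  carrier := {t | ∃ s, IsSumSq s ∧ 1 + s = t}
  one_mem' := ⟨0, .zero, add_zero 1⟩
  mul_mem' := by
    rintro _ _ ⟨s, hs, rfl⟩ ⟨t, ht, rfl⟩
    exact ⟨s + t + s * t, (hs.add ht).add (hs.mul ht), by ring⟩

section

variable {A K : Type*} [CommRing A] [CommRing K]

theorem mem_ringO_iff (f : A →+* K) {x : K} :
    x ∈ ringO f ↔ ∃ m ∈ oneAddSumSq A, f m * x ∈ f.range := by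
  constructor
  · rintro ⟨a, s, hs, h⟩
    exact ⟨1 + s, ⟨s, hs, rfl⟩, a, h.symm⟩
  · rintro ⟨_, ⟨s, hs, rfl⟩, a, ha⟩
    exact ⟨a, s, hs, ha.symm⟩

theorem RingHom.exists_mem_forall_mul_mem_range (f : A →+* K) (M : Submonoid A) {ι : Type*}
    (s : Finset ι) (x : ι → K) (hx : ∀ i ∈ s, ∃ m ∈ M, f m * x i ∈ f.range) :
    ∃ m ∈ M, ∀ i ∈ s, f m * x i ∈ f.range := by
  classical
  induction s using Finset.induction_on with
  | empty => exact ⟨1, M.one_mem, by simp⟩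
  | insert j s _ ih =>
    obtain ⟨m, hm, hms⟩ := ih fun i hi => hx i (Finset.mem_insert_of_mem hi)
    obtain ⟨n, hn, hnj⟩ := hx j (Finset.mem_insert_self j s)
    refine ⟨m * n, M.mul_mem hm hn, (Finset.forall_mem_insert _ _ _).2 ⟨?_, fun i hi => ?_⟩⟩
    · rw [map_mul, mul_assoc]
      exact mul_mem (f.mem_range_self m) hnj
    · rw [map_mul, mul_comm (f m), mul_assoc]
      exact mul_mem (f.mem_range_self n) (hms i hi)

theorem RingHom.isIntegralElem_mul_of_coeff_mul_mem_range (f : A →+* K) {P : K[X]}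
    (hP : P.Monic) {u : K} (hu : P.eval u = 0) {t : A} (ht : ∀ i, f t * P.coeff i ∈ f.range) :
    f.IsIntegralElem (f t * u) := by
  have hlifts : P.scaleRoots (f t) ∈ lifts f := by
    refine (lifts_iff_coeff_lifts _).2 fun i => ?_
    change _ ∈ f.range
    rw [coeff_scaleRoots]
    by_cases hi : i < P.natDegree
    · obtain ⟨k, hk⟩ : ∃ k, P.natDegree - i = k + 1 := ⟨P.natDegree - i - 1, by omega⟩
      rw [hk, pow_succ', ← mul_assoc, mul_comm (P.coeff i)]
      exact mul_mem (ht i) (pow_mem (f.mem_range_self t) k)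
    · rw [Nat.sub_eq_zero_of_le (not_lt.1 hi), pow_zero, mul_one]
      rcases (not_lt.1 hi).lt_or_eq with hi | rfl
      · rw [coeff_eq_zero_of_natDegree_lt hi]
        exact zero_mem _
      · rw [hP.coeff_natDegree]
        exact one_mem _
  obtain ⟨q, hq, -, hqm⟩ :=
    lifts_and_natDegree_eq_and_monic hlifts ((monic_scaleRoots_iff _).2 hP)
  refine ⟨q, hqm, ?_⟩
  rw [← eval_map, hq]
  exact scaleRoots_eval₂_eq_zero (RingHom.id K) hu

theorem exists_isSumSq_isIntegralElem_mul_of_isIntegralElem_ringO (f : A →+* K) {u : K}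
    (hu : (ringO f).subtype.IsIntegralElem u) :
    ∃ s, IsSumSq s ∧ f.IsIntegralElem (f (1 + s) * u) := by
  obtain ⟨p, hpm, hpu⟩ := hu
  obtain ⟨_, ⟨s, hs, rfl⟩, hden⟩ :=
    f.exists_mem_forall_mul_mem_range (oneAddSumSq A) p.support (fun i => (p.coeff i : K))
      fun i _ => (mem_ringO_iff f).1 (p.coeff i).2
  refine ⟨s, hs, f.isIntegralElem_mul_of_coeff_mul_mem_range (hpm.map _)
    (by rwa [eval_map]) fun i => ?_⟩
  rw [coeff_map]
  by_cases hi : i ∈ p.support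
  · exact hden i hi
  · rw [notMem_support_iff.1 hi, map_zero, mul_zero]
    exact zero_mem _

theorem mem_ringO_integralClosure_of_isIntegral_mul [Algebra A K] {s : A} (hs : IsSumSq s)
    {v : K} (hv : IsIntegral A (algebraMap A K (1 + s) * v)) :
    v ∈ ringO (integralClosure A K).toSubring.subtype :=
  ⟨⟨_, hv⟩, algebraMap A (integralClosure A K) s, hs.map _, by
    simp only [Subalgebra.toSubring_subtype, RingHom.coe_coe, map_add, map_one]
    rfl⟩

end

theorem integral_over_ringO_mem_ringO_integralClosure_general {A : Type*} [CommRing A]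
    (u : FractionRing A)
    (hu : ((ringO (algebraMap A (FractionRing A))).subtype).IsIntegralElem u) :
    (∃ a ∈ integralClosure A (FractionRing A), ∃ s : A, IsSumSq s ∧
        algebraMap A (FractionRing A) (1 + s) * u = a) ∧
    (∀ v : FractionRing A,
        ((ringO (algebraMap A (FractionRing A))).subtype).IsIntegralElem v →
        v ∈ ringO ((integralClosure A (FractionRing A)).toSubring.subtype)) := by
  obtain ⟨s, hs, hsu⟩ := exists_isSumSq_isIntegralElem_mul_of_isIntegralElem_ringO _ hu
  refine ⟨⟨_, hsu, s, hs, rfl⟩, fun v hv => ?_⟩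
  obtain ⟨t, ht, htv⟩ := exists_isSumSq_isIntegralElem_mul_of_isIntegralElem_ringO _ hv
  exact mem_ringO_integralClosure_of_isIntegral_mul ht htv

/-- Let `A` satisfy (MP), with total ring of fractions `K` and integral
closure `A'` of `A` in `K`. If `u ∈ K` is integral over the subring
`O(A) = (1+ΣA²)⁻¹A ⊆ K`, then `t · u = a` in `K` for some `a ∈ A'` and `t = 1 + s` with
`s ∈ ΣA²`; in particular the integral closure of `O(A)` in `K` is contained in the subring
`O(A') = {a/t : a ∈ A', t ∈ 1+Σ(A')²}` of `K`. -/
theorem integral_over_ringO_mem_ringO_integralClosure {A : Type*} [CommRing A] [IsReduced A]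
    (hfin : (minimalPrimes A).Finite)
    (hreal : ∀ p ∈ minimalPrimes A, IsRealIdeal p)
    (u : FractionRing A)
    (hu : ((ringO (algebraMap A (FractionRing A))).subtype).IsIntegralElem u) :
    (∃ a ∈ integralClosure A (FractionRing A), ∃ s : A, IsSumSq s ∧
        algebraMap A (FractionRing A) (1 + s) * u = a) ∧
    (∀ v : FractionRing A,
        ((ringO (algebraMap A (FractionRing A))).subtype).IsIntegralElem v →
        v ∈ ringO ((integralClosure A (FractionRing A)).toSubring.subtype)) :=
  integral_over_ringO_mem_ringO_integralClosure_general u hu
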